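/- arXiv:1804.06514 — 2 statements merged into one kernel-verified Lean document; each statement's English description precedes it below -/
import Mathlib

section
/- With the optimal discriminator D*(x) = p_data(x)/(p_data(x)+p_g(x)), the GAN value C(G) = ∑_x p_data(x) log D*(x) + ∑_x p_g(x) log(1 - D*(x)) satisfies C(G) = -log 4 + 2 · D_JS(p_data ‖ p_g). -/
noncomputable def KL {α : Type*} [Fintype α] (p q : α → ℝ) : ℝ :=
  ∑ x, p x * Real.log (p x / q x)

noncomputable def JS {α : Type*} [Fintype α] (p q : α → ℝ) : ℝ :=
  (1/2) * KL p (fun x => (p x + q x) / 2) + (1/2) * KL q (fun x => (p x + q x) / 2)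

/-! The GAN value is `KL(p_data ‖ p_data + p_g) + KL(p_g ‖ p_data + p_g)`, against the unnormalised
mixture. Halving the reference measure shifts each `KL(p ‖ ·)` by `(∑ p) · log 2 = log 2`,
so `2 · JS` exceeds the GAN value by exactly `2 log 2 = log 4`. -/

open Real

lemma mul_log_div_div {a s c : ℝ} (hs : s ≠ 0) (hc : c ≠ 0) :
    a * log (a / (s / c)) = a * log (a / s) + a * log c := by
  rcases eq_or_ne a 0 with rfl | ha
  · simp
  · rw [div_div_eq_mul_div, mul_div_right_comm, log_mul (div_ne_zero ha hs) hc, mul_add]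

lemma KL_div_const {α : Type*} [Fintype α] (p q : α → ℝ) {c : ℝ} (hq : ∀ x, q x ≠ 0)
    (hc : c ≠ 0) : KL p (fun x => q x / c) = KL p q + (∑ x, p x) * log c := by
  simp only [KL, mul_log_div_div (hq _) hc, Finset.sum_add_distrib, Finset.sum_mul]

theorem gan_value_eq_js_general {α : Type*} [Fintype α] (pdata pg : α → ℝ)
    (hps : ∑ x, pdata x = 1) (hqs : ∑ x, pg x = 1)
    (hpos : ∀ x, 0 < pdata x + pg x) :
    (∑ x, pdata x * Real.log (pdata x / (pdata x + pg x))) +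
      (∑ x, pg x * Real.log (pg x / (pdata x + pg x))) =
    -Real.log 4 + 2 * JS pdata pg := by
  have hmix : ∀ x, pdata x + pg x ≠ 0 := fun x => (hpos x).ne'
  have hlog4 : log 4 = 2 * log 2 := by
    rw [show (4 : ℝ) = 2 ^ 2 by norm_num, log_pow, Nat.cast_ofNat]
  change KL pdata (fun x => pdata x + pg x) + KL pg (fun x => pdata x + pg x) = _
  rw [JS, KL_div_const _ _ hmix two_ne_zero, KL_div_const _ _ hmix two_ne_zero, hps, hqs, hlog4]
  ring

theorem gan_value_eq_js {α : Type*} [Fintype α] (pdata pg : α → ℝ)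
    (hp : ∀ x, 0 ≤ pdata x) (hq : ∀ x, 0 ≤ pg x)
    (hps : ∑ x, pdata x = 1) (hqs : ∑ x, pg x = 1)
    (hpos : ∀ x, 0 < pdata x + pg x) :
    (∑ x, pdata x * Real.log (pdata x / (pdata x + pg x))) +
      (∑ x, pg x * Real.log (pg x / (pdata x + pg x))) =
    -Real.log 4 + 2 * JS pdata pg :=
  gan_value_eq_js_general pdata pg hps hqs hpos
end

section
/- The global minimum over p_g of C(G) = -log 4 + 2 D_JS(p_data ‖ p_g) is achieved if and only if p_g = p_data, and the minimum value is -log 4. -/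
lemma pt_le (p q : ℝ) (hp : 0 ≤ p) (hq : 0 ≤ q) (h : 0 < p → 0 < q) :
    p - q ≤ p * Real.log (p / q) := by
  rcases eq_or_lt_of_le hp with h0 | hp'
  · simp [← h0]; linarith
  · have hq' := h hp'
    have hx : 0 < q / p := div_pos hq' hp'
    have := Real.log_le_sub_one_of_pos hx
    have hlog : Real.log (q / p) = - Real.log (p / q) := by
      rw [← Real.log_inv]; congr 1; field_simp
    rw [hlog] at this
    have : 1 - q / p ≤ Real.log (p / q) := by linarith
    have h2 : p * (1 - q / p) ≤ p * Real.log (p / q) :=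
      mul_le_mul_of_nonneg_left this hp
    have h3 : p * (1 - q / p) = p - q := by field_simp
    linarith

lemma pt_lt (p q : ℝ) (hp : 0 ≤ p) (hq : 0 ≤ q) (h : 0 < p → 0 < q)
    (hne : p ≠ q) : p - q < p * Real.log (p / q) := by
  rcases eq_or_lt_of_le hp with h0 | hp'
  · have hq' : 0 < q := lt_of_le_of_ne hq fun e => hne (h0.symm.trans e)
    simp [← h0]; linarith
  · have hq' := h hp'
    have hx : 0 < q / p := div_pos hq' hp'
    have hx1 : q / p ≠ 1 := by
      intro e
      exact hne ((div_eq_one_iff_eq (ne_of_gt hp')).mp e).symm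
    have := Real.log_lt_sub_one_of_pos hx hx1
    have hlog : Real.log (q / p) = - Real.log (p / q) := by
      rw [← Real.log_inv]; congr 1; field_simp
    rw [hlog] at this
    have h1 : 1 - q / p < Real.log (p / q) := by linarith
    have h2 : p * (1 - q / p) < p * Real.log (p / q) :=
      (mul_lt_mul_iff_right₀ hp').mpr h1
    have h3 : p * (1 - q / p) = p - q := by field_simp
    linarith

lemma KL_nonneg {α : Type*} [Fintype α] (p q : α → ℝ)
    (hp : ∀ x, 0 ≤ p x) (hq : ∀ x, 0 ≤ q x) (h : ∀ x, 0 < p x → 0 < q x)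
    (hsum : ∑ x, p x = ∑ x, q x) : 0 ≤ KL p q := by
  have : ∑ x, (p x - q x) ≤ ∑ x, p x * Real.log (p x / q x) :=
    Finset.sum_le_sum fun x _ => pt_le (p x) (q x) (hp x) (hq x) (h x)
  have hz : ∑ x, (p x - q x) = 0 := by
    rw [Finset.sum_sub_distrib, hsum]; ring
  unfold KL; linarith

lemma KL_eq_zero {α : Type*} [Fintype α] (p q : α → ℝ)
    (hp : ∀ x, 0 ≤ p x) (hq : ∀ x, 0 ≤ q x) (h : ∀ x, 0 < p x → 0 < q x)
    (hsum : ∑ x, p x = ∑ x, q x) (hkl : KL p q = 0) : ∀ x, p x = q x := by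
  classical
  intro x
  by_contra hne
  have hx : p x - q x < p x * Real.log (p x / q x) :=
    pt_lt (p x) (q x) (hp x) (hq x) (h x) hne
  have hrest : ∀ y ∈ Finset.univ.erase x, p y - q y ≤ p y * Real.log (p y / q y) :=
    fun y _ => pt_le (p y) (q y) (hp y) (hq y) (h y)
  have hlt : ∑ y, (p y - q y) < ∑ y, p y * Real.log (p y / q y) := by
    rw [← Finset.sum_erase_add _ _ (Finset.mem_univ x),
        ← Finset.sum_erase_add _ (fun y => p y * Real.log (p y / q y)) (Finset.mem_univ x)]
    exact add_lt_add_of_le_of_lt (Finset.sum_le_sum hrest) hx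
  have hz : ∑ y, (p y - q y) = 0 := by
    rw [Finset.sum_sub_distrib, hsum]; ring
  rw [hz] at hlt
  unfold KL at hkl
  linarith

theorem gan_global_minimum {α : Type*} [Fintype α] (pdata : α → ℝ)
    (hp : ∀ x, 0 ≤ pdata x) (hps : ∑ x, pdata x = 1) :
    (∀ pg : α → ℝ, (∀ x, 0 ≤ pg x) → ∑ x, pg x = 1 →
        -Real.log 4 ≤ -Real.log 4 + 2 * JS pdata pg) ∧
    (∀ pg : α → ℝ, (∀ x, 0 ≤ pg x) → ∑ x, pg x = 1 →
        (-Real.log 4 + 2 * JS pdata pg = -Real.log 4 ↔ pg = pdata)) := by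
  have key : ∀ pg : α → ℝ, (∀ x, 0 ≤ pg x) → ∑ x, pg x = 1 →
      0 ≤ KL pdata (fun x => (pdata x + pg x) / 2) ∧
      0 ≤ KL pg (fun x => (pdata x + pg x) / 2) := by
    intro pg hg hgs
    have hm : ∀ x, 0 ≤ (pdata x + pg x) / 2 := fun x => by
      have := hp x; have := hg x; linarith
    have hms : ∑ x, (pdata x + pg x) / 2 = 1 := by
      rw [← Finset.sum_div, Finset.sum_add_distrib, hps, hgs]; norm_num
    constructor
    · exact KL_nonneg _ _ hp hm (fun x h => by have := hg x; linarith) (by rw [hps, hms])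
    · exact KL_nonneg _ _ hg hm (fun x h => by have := hp x; linarith) (by rw [hgs, hms])
  constructor
  · intro pg hg hgs
    obtain ⟨h1, h2⟩ := key pg hg hgs
    unfold JS; linarith
  · intro pg hg hgs
    obtain ⟨h1, h2⟩ := key pg hg hgs
    constructor
    · intro heq
      have hjs : JS pdata pg = 0 := by linarith
      have hkl : KL pdata (fun x => (pdata x + pg x) / 2) = 0 := by
        unfold JS at hjs; linarith
      have hms : ∑ x, (pdata x + pg x) / 2 = 1 := by
        rw [← Finset.sum_div, Finset.sum_add_distrib, hps, hgs]; norm_num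
      have := KL_eq_zero pdata (fun x => (pdata x + pg x) / 2) hp
        (fun x => by have := hp x; have := hg x; linarith)
        (fun x h => by have := hg x; linarith)
        (by rw [hps, hms]) hkl
      funext x
      have hx := this x
      linarith
    · intro heq
      rw [heq]
      have hkl : KL pdata (fun x => (pdata x + pdata x) / 2) = 0 := by
        unfold KL
        apply Finset.sum_eq_zero
        intro x _
        rcases eq_or_lt_of_le (hp x) with h0 | h0
        · rw [← h0]; ring
        · show pdata x * Real.log (pdata x / ((pdata x + pdata x) / 2)) = 0
          have : (pdata x + pdata x) / 2 = pdata x := by ring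
          rw [this, div_self (ne_of_gt h0), Real.log_one, mul_zero]
      unfold JS
      rw [hkl]
      ring
end
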